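/- arXiv:2005.09114 — 5 statements merged into one kernel-verified Lean document; each statement's English description precedes it below -/
import Mathlib

section
/- For every integer k ≥ 0 and every real s > 1, the derivative of the ratio T_{k+1}(s)/T_k(s) of Chebyshev polynomials of the first kind is strictly positive; that is, the ratio T_{k+1}/T_k is strictly increasing on (1, ∞). -/
/-!
The derivative of `T_{k+1}/T_k` is `W_k / T_k²`, where `W_k = T_k T'_{k+1} - T'_k T_{k+1}` is the
Wronskian of consecutive Chebyshev polynomials. The three-term recurrence gives
`W_{k+1} = W_k + 2 T_{k+1}²`, and `W_0 = 1`, so `W_k` is positive everywhere, while `T_k ≥ 1`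
on `[1, ∞)`.
-/

open Polynomial Polynomial.Chebyshev

namespace Polynomial

theorem hasDerivAt_eval_div_eval {𝕜 : Type*} [NontriviallyNormedField 𝕜] (p q : 𝕜[X])
    {x : 𝕜} (hq : q.eval x ≠ 0) :
    HasDerivAt (fun y => p.eval y / q.eval y) ((wronskian q p).eval x / q.eval x ^ 2) x := by
  refine ((p.hasDerivAt x).div (q.hasDerivAt x) hq).congr_deriv ?_
  rw [wronskian, eval_sub, eval_mul, eval_mul]
  ring

namespace Chebyshev

theorem wronskian_T_add_one (R : Type*) [CommRing R] (n : ℤ) :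
    wronskian (T R (n + 1)) (T R (n + 2)) =
      wronskian (T R n) (T R (n + 1)) + 2 * T R (n + 1) ^ 2 := by
  simp only [wronskian, T_add_two, derivative_sub, derivative_mul, derivative_X, derivative_ofNat]
  ring

theorem eval_wronskian_T_pos {R : Type*} [CommRing R] [LinearOrder R] [IsStrictOrderedRing R]
    (k : ℕ) (x : R) : 0 < (wronskian (T R k) (T R (k + 1))).eval x := by
  induction k with
  | zero => simp [wronskian]
  | succ k ih =>
    have h := wronskian_T_add_one R k
    push_cast at h ⊢
    rw [add_assoc, one_add_one_eq_two, h, eval_add]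
    refine add_pos_of_pos_of_nonneg ih ?_
    simp only [eval_mul, eval_pow, eval_ofNat]
    positivity

end Chebyshev

end Polynomial

/-- The ratio `T_{k+1}/T_k` of Chebyshev polynomials of the first kind has
strictly positive derivative on `(1, ∞)`; that is, it is strictly increasing
on `(1, ∞)`. -/
theorem stmt_6 (k : ℕ) :
    (∀ s : ℝ, 1 < s →
      0 < deriv (fun x => (Chebyshev.T ℝ (k + 1)).eval x / (Chebyshev.T ℝ k).eval x) s) ∧
    StrictMonoOn (fun x => (Chebyshev.T ℝ (k + 1)).eval x / (Chebyshev.T ℝ k).eval x)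
      (Set.Ioi 1) := by
  have hT : ∀ s : ℝ, 1 < s → 0 < (T ℝ k).eval s := fun s hs =>
    zero_lt_one.trans_le (one_le_eval_T_real k hs.le)
  have hasDeriv : ∀ s : ℝ, 1 < s → HasDerivAt _ _ s := fun s hs =>
    hasDerivAt_eval_div_eval (T ℝ (k + 1)) (T ℝ k) (hT s hs).ne'
  have hderiv : ∀ s : ℝ, 1 < s →
      0 < deriv (fun x => (T ℝ (k + 1)).eval x / (T ℝ k).eval x) s := fun s hs => by
    rw [(hasDeriv s hs).deriv]
    exact div_pos (eval_wronskian_T_pos k s) (pow_pos (hT s hs) 2)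
  refine ⟨hderiv, strictMonoOn_of_deriv_pos (convex_Ioi 1) ?_ ?_⟩
  · exact fun s hs => (hasDeriv s hs).continuousAt.continuousWithinAt
  · rw [interior_Ioi]
    exact hderiv
end

section
/- For integers k ≥ 0 and real s > 1, define u_k = a·T_{k+1}(s)/T_k(s) where a = 2/(1+s) and T_n is the Chebyshev polynomial of the first kind. Then the sequence (u_k) is strictly increasing in k, u_0 = 2 − a, and u_k → a·(s + √(s²−1)) as k → ∞. -/
open Polynomial Polynomial.Chebyshev Filter

/-!
Write `s = (p + q) / 2` with `p = s + √(s² - 1)` and `q = s - √(s² - 1)`, so that `p q = 1`.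
Then `2 T_k(s) = p^k + q^k` (Dickson's identity), and `u_k / a` is the ratio of consecutive power
sums `(p^(k+1) + q^(k+1)) / (p^k + q^k)`. This ratio increases because its cross-multiplied
difference is `(p q)^k (p - q)^2 > 0`, and it tends to the dominant root `p`.
-/

theorem Polynomial.Chebyshev.two_mul_T_eval_eq_pow_add_pow {R : Type*} [CommRing R]
    {x y z : R} (hxy : x * y = 1) (hz : x + y = 2 * z) (n : ℕ) :
    2 * (T R n).eval z = x ^ n + y ^ n := by
  rw [← dickson_one_one_eval_add_inv x y hxy n, dickson_one_one_eq_chebyshev_C, hz]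
  simpa using (congrArg (eval z) (C_comp_two_mul_X R n)).symm

noncomputable def powSumRatio (p q : ℝ) (k : ℕ) : ℝ := (p ^ (k + 1) + q ^ (k + 1)) / (p ^ k + q ^ k)

theorem powSumRatio_strictMono {p q : ℝ} (hp : 0 < p) (hq : 0 < q) (hpq : p ≠ q) :
    StrictMono (powSumRatio p q) := by
  refine strictMono_nat_of_lt_succ fun k => ?_
  rw [powSumRatio, powSumRatio, div_lt_div_iff₀ (by positivity) (by positivity), ← sub_pos]
  have hdiff : (p ^ (k + 1 + 1) + q ^ (k + 1 + 1)) * (p ^ k + q ^ k)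
      - (p ^ (k + 1) + q ^ (k + 1)) * (p ^ (k + 1) + q ^ (k + 1))
      = (p * q) ^ k * (p - q) ^ 2 := by ring
  rw [hdiff]
  have : 0 < (p - q) ^ 2 := sq_pos_of_ne_zero (sub_ne_zero.mpr hpq)
  positivity

theorem tendsto_powSumRatio {p q : ℝ} (hqp : |q| < p) :
    Tendsto (powSumRatio p q) atTop (nhds p) := by
  have hp : 0 < p := (abs_nonneg q).trans_lt hqp
  have hρ : Tendsto (fun k : ℕ => (q / p) ^ k) atTop (nhds 0) :=
    tendsto_pow_atTop_nhds_zero_of_abs_lt_one <| by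
      rwa [abs_div, abs_of_pos hp, div_lt_one hp]
  have hform : (fun k : ℕ => (p + q * (q / p) ^ k) / (1 + (q / p) ^ k)) = powSumRatio p q := by
    funext k
    rw [powSumRatio, div_pow, ← mul_div_mul_right _ _ (pow_pos hp k).ne']
    field_simp
    ring
  have hlim := ((hρ.const_mul q).const_add p).div (hρ.const_add 1) (by norm_num)
  rw [← hform]
  simpa only [mul_zero, add_zero, div_one, Pi.div_def] using hlim

/-- For `s > 1` and `a = 2/(1+s)`, the sequence `u_k = a·T_{k+1}(s)/T_k(s)` is
strictly increasing, starts at `u_0 = 2 - a`, and converges to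
`a·(s + √(s² - 1))`. -/
theorem stmt_9 (s : ℝ) (hs : 1 < s) (a : ℝ) (ha : a = 2 / (1 + s))
    (u : ℕ → ℝ)
    (hu : ∀ k, u k = a * (Chebyshev.T ℝ (k + 1)).eval s / (Chebyshev.T ℝ k).eval s) :
    StrictMono u ∧ u 0 = 2 - a ∧
      Tendsto u atTop (nhds (a * (s + Real.sqrt (s ^ 2 - 1)))) := by
  set r := Real.sqrt (s ^ 2 - 1)
  have hr2 : r ^ 2 = s ^ 2 - 1 := Real.sq_sqrt (by nlinarith)
  have hr : 0 < r := Real.sqrt_pos.mpr (by nlinarith)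
  have hrs : r < s := by nlinarith
  have hT (k : ℕ) : 2 * (T ℝ k).eval s = (s + r) ^ k + (s - r) ^ k :=
    two_mul_T_eval_eq_pow_add_pow (by linear_combination -hr2) (by ring) k
  have hu' : u = fun k => a * powSumRatio (s + r) (s - r) k := by
    funext k
    rw [hu, mul_div_assoc, ← Nat.cast_succ, powSumRatio, ← hT, ← hT,
      mul_div_mul_left _ _ two_ne_zero]
  have ha0 : 0 < a := by rw [ha]; positivity
  subst hu'
  refine ⟨?_, ?_, ?_⟩
  · exact (powSumRatio_strictMono (by linarith) (by linarith) (by linarith)).const_mul ha0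
  · dsimp only [powSumRatio]
    rw [ha]
    field_simp
    ring
  · exact (tendsto_powSumRatio (by rw [abs_of_pos (by linarith)]; linarith)).const_mul a
end

section
/- For s > 1 and k ≥ 0, the quantity α_{2k} := −(u_k − v)/(u_k + v), where u_k = a·T_{k+1}(s)/T_k(s), v = a, and a = 2/(1+s), is negative and strictly decreasing in k; moreover α_{2k} → −(s + √(s²−1) − 1)/(s + √(s²−1) + 1) as k → ∞. -/
open Polynomial Polynomial.Chebyshev Filter

/-- For `s > 1`, with `a = 2/(1+s)`, `u_k = a·T_{k+1}(s)/T_k(s)` and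
`α_{2k} = -(u_k - a)/(u_k + a)`, each `α_{2k}` is negative, the sequence is
strictly decreasing, and it converges to `-(q - 1)/(q + 1)` where
`q = s + √(s² - 1)`. -/
theorem stmt_10 (s : ℝ) (hs : 1 < s) (a : ℝ) (ha : a = 2 / (1 + s))
    (u : ℕ → ℝ)
    (hu : ∀ k, u k = a * (Chebyshev.T ℝ (k + 1)).eval s / (Chebyshev.T ℝ k).eval s)
    (α : ℕ → ℝ) (hα : ∀ k, α k = -((u k - a) / (u k + a))) :
    (∀ k, α k < 0) ∧ StrictAnti α ∧
      Tendsto α atTop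
        (nhds (-((s + Real.sqrt (s ^ 2 - 1) - 1) / (s + Real.sqrt (s ^ 2 - 1) + 1)))) := by
  set q := s + Real.sqrt (s ^ 2 - 1) with hqdef
  have hs2 : (0:ℝ) ≤ s ^ 2 - 1 := by nlinarith
  have hsqrt : Real.sqrt (s ^ 2 - 1) ^ 2 = s ^ 2 - 1 := Real.sq_sqrt hs2
  have hsqrt0 : 0 ≤ Real.sqrt (s ^ 2 - 1) := Real.sqrt_nonneg _
  have hq1 : 1 < q := by simp only [hqdef]; nlinarith
  have hq0 : 0 < q := by linarith
  have hqinv : q⁻¹ = 2 * s - q := by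
    have hm : q * (2 * s - q) = 1 := by simp only [hqdef]; nlinarith
    exact inv_eq_of_mul_eq_one_right hm
  have hqi0 : 0 < q⁻¹ := inv_pos.mpr hq0
  have hqi1 : q⁻¹ < 1 := inv_lt_one_of_one_lt₀ hq1
  set c : ℕ → ℝ := fun k => (q ^ k + q⁻¹ ^ k) / 2 with hc
  have hT : ∀ k : ℕ, (Chebyshev.T ℝ k).eval s = c k := by
    have key : ∀ k : ℕ, (Chebyshev.T ℝ k).eval s = c k ∧
        (Chebyshev.T ℝ (k + 1)).eval s = c (k + 1) := by
      intro k
      induction k with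
      | zero =>
        constructor
        · simp [hc]
        · simp only [Nat.cast_zero, zero_add, Chebyshev.T_one, eval_X, hc]
          rw [hqinv]; ring
      | succ n ih =>
        refine ⟨ih.2, ?_⟩
        have h2 : ((n:ℤ) + 1) + 1 = (n : ℤ) + 2 := by ring
        rw [show (((n + 1 : ℕ)):ℤ) + 1 = (n : ℤ) + 2 by push_cast; ring,
          Chebyshev.T_add_two]
        simp only [eval_sub, eval_mul, eval_ofNat, eval_X]
        rw [ih.1, ih.2]
        have hmul : q * q⁻¹ = 1 := mul_inv_cancel₀ (ne_of_gt hq0)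
        have h2s : q + q⁻¹ = 2 * s := by rw [hqinv]; ring
        simp only [hc]
        have e1 : q ^ (n + 1 + 1) = q * q ^ (n + 1) := by ring
        have e2 : q⁻¹ ^ (n + 1 + 1) = q⁻¹ * q⁻¹ ^ (n + 1) := by ring
        have e3 : q ^ (n+1) = q * q ^ n := by ring
        have e4 : q⁻¹ ^ (n+1) = q⁻¹ * q⁻¹ ^ n := by ring
        rw [e1, e2, e3, e4]
        linear_combination (-((q * q ^ n + q⁻¹ * q⁻¹ ^ n) / 2)) * h2s +
          ((q ^ n + q⁻¹ ^ n) / 2) * hmul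
    exact fun k => (key k).1
  have hc0 : ∀ k, 0 < c k := by
    intro k; simp only [hc]; positivity
  have hq2 : 2 < q + q⁻¹ := by rw [hqinv]; linarith
  have hcmono : ∀ k, c k < c (k + 1) := by
    intro k
    simp only [hc]
    have h1 : (1:ℝ) ≤ q ^ k := one_le_pow₀ hq1.le
    have h2 : q⁻¹ ^ k ≤ 1 := pow_le_one₀ hqi0.le hqi1.le
    have e1 : q ^ (k+1) = q * q ^ k := by ring
    have e2 : q⁻¹ ^ (k+1) = q⁻¹ * q⁻¹ ^ k := by ring
    rw [e1, e2]
    have h3 : (0:ℝ) ≤ (q - 1) * (q ^ k - 1) :=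
      mul_nonneg (by linarith) (by linarith)
    have h4 : (0:ℝ) ≤ (1 - q⁻¹) * (1 - q⁻¹ ^ k) :=
      mul_nonneg (by linarith) (by linarith)
    nlinarith
  set r : ℕ → ℝ := fun k => c (k + 1) / c k with hr
  have hr1 : ∀ k, 1 < r k := by
    intro k
    simp only [hr]
    rw [lt_div_iff₀ (hc0 k)]
    linarith [hcmono k]
  have hrmono : ∀ k, r k < r (k + 1) := by
    intro k
    simp only [hr]
    rw [div_lt_div_iff₀ (hc0 k) (hc0 (k+1))]
    have key : c (k+1) * c (k+1) < c (k+2) * c k := by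
      simp only [hc]
      have hmul : q * q⁻¹ = 1 := mul_inv_cancel₀ (ne_of_gt hq0)
      have e1 : q ^ (k+1) = q * q ^ k := by ring
      have e2 : q⁻¹ ^ (k+1) = q⁻¹ * q⁻¹ ^ k := by ring
      have e3 : q ^ (k+2) = q * q * q ^ k := by ring
      have e4 : q⁻¹ ^ (k+2) = q⁻¹ * q⁻¹ * q⁻¹ ^ k := by ring
      rw [e1, e2, e3, e4]
      have hqq : q⁻¹ < q := lt_trans hqi1 hq1
      have hpk : q ^ k * q⁻¹ ^ k = 1 := by
        rw [← mul_pow, hmul, one_pow]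
      nlinarith [sq_nonneg (q - q⁻¹), pow_pos hq0 k, pow_pos hqi0 k]
    calc c (k+1) * c (k+1) < c (k+2) * c k := key
      _ = c (k + 1 + 1) * c k := by norm_num
  have hua : ∀ k, u k = a * r k := by
    intro k
    rw [hu k, hT k]
    rw [show ((k:ℤ) + 1) = (((k+1:ℕ)):ℤ) by push_cast; ring, hT (k+1)]
    simp only [hr]; ring
  have ha0 : 0 < a := by rw [ha]; positivity
  have hαr : ∀ k, α k = -((r k - 1) / (r k + 1)) := by
    intro k
    rw [hα k, hua k]
    rw [show a * r k - a = a * (r k - 1) by ring, show a * r k + a = a * (r k + 1) by ring,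
      mul_div_mul_left _ _ (ne_of_gt ha0)]
  have hneg : ∀ k, α k < 0 := by
    intro k
    rw [hαr k]
    have h1 := hr1 k
    have : 0 < (r k - 1) / (r k + 1) := div_pos (by linarith) (by linarith)
    linarith
  refine ⟨hneg, ?_, ?_⟩
  · apply strictAnti_nat_of_succ_lt
    intro k
    rw [hαr k, hαr (k + 1)]
    have h1 := hr1 k
    have h2 := hr1 (k + 1)
    have h3 := hrmono k
    rw [neg_lt_neg_iff, div_lt_div_iff₀ (by linarith) (by linarith)]
    nlinarith
  · -- limit
    have hrlim : Tendsto r atTop (nhds q) := by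
      have hform : ∀ k, r k = (q + q⁻¹ * (q⁻¹ ^ 2) ^ k) / (1 + (q⁻¹ ^ 2) ^ k) := by
        intro k
        have hpk : q ^ k * q⁻¹ ^ k = 1 := by
          rw [← mul_pow, mul_inv_cancel₀ (ne_of_gt hq0), one_pow]
        have hck := hc0 k
        have ht : (0:ℝ) < 1 + (q⁻¹ ^ 2) ^ k := by positivity
        simp only [hr]
        rw [div_eq_div_iff (ne_of_gt hck) (ne_of_gt ht)]
        simp only [hc]
        linear_combination (((q - q⁻¹) * q⁻¹ ^ k) / 2) * hpk
      have hlt : q⁻¹ ^ 2 < 1 := by nlinarith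
      have hz : Tendsto (fun k : ℕ => (q⁻¹ ^ 2) ^ k) atTop (nhds 0) :=
        tendsto_pow_atTop_nhds_zero_of_lt_one (by positivity) hlt
      have : Tendsto (fun k : ℕ => (q + q⁻¹ * (q⁻¹ ^ 2) ^ k) / (1 + (q⁻¹ ^ 2) ^ k)) atTop
          (nhds ((q + q⁻¹ * 0) / (1 + 0))) := by
        apply Tendsto.div
        · exact tendsto_const_nhds.add (tendsto_const_nhds.mul hz)
        · exact tendsto_const_nhds.add hz
        · norm_num
      simp only [mul_zero, add_zero] at this
      rw [div_one] at this
      exact this.congr fun k => (hform k).symm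
    have : Tendsto (fun k => -((r k - 1) / (r k + 1))) atTop (nhds (-((q - 1) / (q + 1)))) := by
      apply Tendsto.neg
      apply Tendsto.div (hrlim.sub tendsto_const_nhds) (hrlim.add tendsto_const_nhds)
      linarith
    exact this.congr fun k => (hαr k).symm
end

section
/- Let μ and μ_j (j ∈ ℕ) be finite Borel measures all supported in a common closed disc D ⊂ ℂ, with μ_j → μ weakly (i.e., ∫ f dμ_j → ∫ f dμ for every continuous f on D). Fix p ∈ (0, ∞) and n ∈ ℕ, and let t_{p,n}(ν) = inf { ‖P‖_{L^p(ν)} : P monic polynomial of degree n }. Then t_{p,n}(μ_j) → t_{p,n}(μ) as j → ∞. -/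
/-!
Every monic polynomial of degree `n` is `∏ (z - aᵢ)`, and replacing each root `aᵢ` by its
nearest point in the (convex) disc `D` does not increase `|z - aᵢ|` for any `z ∈ D`. Hence
`t_{p,n}(ν)^p` is the minimum over the compact set `Dⁿ` of the continuous function
`w ↦ ∫ ∏ |z - wᵢ|^p dν`. Weak convergence makes these functions converge pointwise; since the
masses `μⱼ(ℂ)` are bounded, the family is equicontinuous, so by Ascoli the convergence is
uniform on `Dⁿ`, and uniform convergence carries the minima along.
-/

open MeasureTheory Filter

/-- The `n`-th `L^p(ν)` extremal (Chebyshev) number: the infimum of `L^p(ν)` norms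
over monic polynomials of degree `n`. -/
noncomputable def tpn (p : ℝ) (n : ℕ) (ν : Measure ℂ) : ℝ :=
  sInf {t : ℝ | ∃ P : Polynomial ℂ, P.Monic ∧ P.natDegree = n ∧
    t = (∫ z, ‖P.eval z‖ ^ p ∂ν) ^ (1 / p)}

open Topology Metric Set Polynomial

theorem Convex.exists_mem_forall_dist_le {E : Type*} [NormedAddCommGroup E]
    [InnerProductSpace ℝ E] {K : Set E} (hK : Convex ℝ K) (hne : K.Nonempty)
    (hc : IsComplete K) (u : E) : ∃ v ∈ K, ∀ w ∈ K, dist w v ≤ dist w u := by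
  obtain ⟨v, hvK, hv⟩ := exists_norm_eq_iInf_of_complete_convex hne hc hK u
  have hobtuse := (norm_eq_iInf_iff_real_inner_le_zero hK hvK).mp hv
  refine ⟨v, hvK, fun w hw => ?_⟩
  have key : ‖w - v‖ ^ 2 ≤ ‖w - u‖ ^ 2 := by
    have := norm_sub_sq_real (w - v) (u - v)
    rw [sub_sub_sub_cancel_right] at this
    nlinarith [hobtuse w hw, real_inner_comm (w - v) (u - v), sq_nonneg ‖u - v‖]
  rw [dist_eq_norm, dist_eq_norm]
  exact (pow_le_pow_iff_left₀ (norm_nonneg _) (norm_nonneg _) two_ne_zero).mp key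

theorem Polynomial.Monic.exists_eq_prod_X_sub_C {k : Type*} [Field k] [IsAlgClosed k]
    {P : k[X]} (hP : P.Monic) {n : ℕ} (hdeg : P.natDegree = n) :
    ∃ a : Fin n → k, P = ∏ i, (X - C (a i)) := by
  have hcard : P.roots.toList.length = n := by
    rw [Multiset.length_toList, ← hdeg]
    exact (IsAlgClosed.splits P).natDegree_eq_card_roots.symm
  subst hcard
  refine ⟨P.roots.toList.get, ?_⟩
  conv_lhs => rw [(IsAlgClosed.splits P).eq_prod_roots_of_monic hP, ← Multiset.coe_toList P.roots,
    ← List.ofFn_get P.roots.toList]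
  rw [Multiset.map_coe, Multiset.prod_coe, List.map_ofFn, List.prod_ofFn]
  rfl

section ParametricIntegral

variable {Y α : Type*} [TopologicalSpace Y] [TopologicalSpace α] [MeasurableSpace α]
  [OpensMeasurableSpace α] {D : Set α}

theorem Continuous.integrable_of_ae_mem_compact {ν : Measure α} [IsFiniteMeasure ν]
    {f : α → ℝ} (hf : Continuous f) (hD : IsCompact D) (hν : ∀ᵐ z ∂ν, z ∈ D) :
    Integrable f ν := by
  obtain ⟨C, hC⟩ := hD.exists_bound_of_continuousOn hf.continuousOn
  exact Integrable.of_bound hf.aestronglyMeasurable C (by filter_upwards [hν] using hC)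

theorem equicontinuous_integral_of_ae_mem_compact {ι : Type*} {F : Y → α → ℝ}
    (hF : Continuous F.uncurry) (hD : IsCompact D) {μs : ι → Measure α}
    [∀ j, IsFiniteMeasure (μs j)] (hsupps : ∀ j, ∀ᵐ z ∂μs j, z ∈ D) {C : ℝ}
    (hC : ∀ j, (μs j).real univ ≤ C) :
    Equicontinuous fun j y => ∫ z, F y z ∂μs j := by
  intro y₀
  rw [Metric.equicontinuousAt_iff_right]
  intro ε hε
  set η := ε / (max C 0 + 1)
  have hη : 0 < η := by positivity
  obtain ⟨v, hv, hvF⟩ := hD.mem_uniformity_of_prod hF.continuousOn (mem_univ y₀)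
    (dist_mem_uniformity hη)
  rw [nhdsWithin_univ] at hv
  filter_upwards [hv] with y hy j
  have hcont : ∀ y, Continuous (F y) := fun y => hF.uncurry_left y
  rw [dist_eq_norm, ← integral_sub ((hcont y₀).integrable_of_ae_mem_compact hD (hsupps j))
    ((hcont y).integrable_of_ae_mem_compact hD (hsupps j))]
  calc ‖∫ z, (F y₀ z - F y z) ∂μs j‖ ≤ η * (μs j).real univ := by
        refine norm_integral_le_of_norm_le_const ?_
        filter_upwards [hsupps j] with z hz
        rw [← dist_eq_norm, dist_comm]
        exact (hvF y hy z hz).le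
    _ ≤ η * max C 0 := by gcongr; exact (hC j).trans (le_max_left _ _)
    _ < ε := by
        rw [div_mul_eq_mul_div, div_lt_iff₀ (by positivity)]
        nlinarith [le_max_right C 0]

theorem tendstoUniformlyOn_integral_of_forall_tendsto {F : Y → α → ℝ}
    (hF : Continuous F.uncurry) (hD : IsCompact D) {μ : Measure α} {μs : ℕ → Measure α}
    [∀ j, IsFiniteMeasure (μs j)] (hsupps : ∀ j, ∀ᵐ z ∂μs j, z ∈ D)
    (hweak : ∀ f : α → ℝ, Continuous f →
      Tendsto (fun j => ∫ z, f z ∂(μs j)) atTop (𝓝 (∫ z, f z ∂μ)))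
    {K : Set Y} (hK : IsCompact K) :
    TendstoUniformlyOn (fun j y => ∫ z, F y z ∂μs j) (fun y => ∫ z, F y z ∂μ) atTop K := by
  have hmass : Tendsto (fun j => (μs j).real univ) atTop (𝓝 (μ.real univ)) := by
    simpa using hweak (fun _ => 1) continuous_const
  obtain ⟨C, hC⟩ := hmass.bddAbove_range
  have heq := (equicontinuous_integral_of_ae_mem_compact hF hD hsupps
    (C := C) fun j => hC ⟨j, rfl⟩).equicontinuousOn K
  have hunif := (EquicontinuousOn.tendsto_uniformOnFun_iff_pi' (𝔖 := {K}) (by simpa using hK)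
    (by simpa using heq) atTop (fun y => ∫ z, F y z ∂μ)).mpr
    (tendsto_pi_nhds.mpr fun y => hweak _ (hF.uncurry_left (y : Y)))
  exact UniformOnFun.tendsto_iff_tendstoUniformlyOn.mp hunif K rfl

end ParametricIntegral

theorem csInf_image_le_csInf_image_add {β : Type*} {K : Set β} {f g : β → ℝ}
    (hK : K.Nonempty) (hf : BddBelow (f '' K)) {ε : ℝ} (h : ∀ x ∈ K, f x ≤ g x + ε) :
    sInf (f '' K) ≤ sInf (g '' K) + ε := by
  rw [← sub_le_iff_le_add]
  refine le_csInf (hK.image g) ?_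
  rintro _ ⟨x, hx, rfl⟩
  linarith [csInf_le hf (mem_image_of_mem f hx), h x hx]

theorem TendstoUniformlyOn.tendsto_csInf_image {β ι : Type*} {l : Filter ι} {F : ι → β → ℝ}
    {f : β → ℝ} {K : Set β} (h : TendstoUniformlyOn F f l K) (hK : K.Nonempty)
    (hf : BddBelow (f '' K)) : Tendsto (fun j => sInf (F j '' K)) l (𝓝 (sInf (f '' K))) := by
  obtain ⟨b, hb⟩ := hf
  rw [Metric.tendsto_nhds]
  intro ε hε
  filter_upwards [Metric.tendstoUniformlyOn_iff.mp h (ε / 2) (half_pos hε)] with j hj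
  have hclose : ∀ x ∈ K, |F j x - f x| ≤ ε / 2 := fun x hx => by
    rw [← Real.dist_eq, dist_comm]; exact (hj x hx).le
  have hFj : BddBelow (F j '' K) := ⟨b - ε / 2, by
    rintro _ ⟨x, hx, rfl⟩
    linarith [hb (mem_image_of_mem f hx), abs_le.mp (hclose x hx)]⟩
  have hle₁ := csInf_image_le_csInf_image_add (g := f) (ε := ε / 2) hK hFj fun x hx => by
    linarith [abs_le.mp (hclose x hx)]
  have hle₂ := csInf_image_le_csInf_image_add (g := F j) (ε := ε / 2) hK ⟨b, hb⟩ fun x hx => by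
    linarith [abs_le.mp (hclose x hx)]
  rw [Real.dist_eq, abs_sub_lt_iff]
  constructor <;> linarith

noncomputable def rootProdIntegral (p : ℝ) (ν : Measure ℂ) {n : ℕ} (w : Fin n → ℂ) : ℝ :=
  ∫ z, ‖∏ i, (z - w i)‖ ^ p ∂ν

section RootProdIntegral

variable {p : ℝ} {n : ℕ} {D : Set ℂ} {ν : Measure ℂ}

theorem continuous_norm_prod_sub_rpow (hp : 0 ≤ p) :
    Continuous (Function.uncurry fun (w : Fin n → ℂ) (z : ℂ) => ‖∏ i, (z - w i)‖ ^ p) :=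
  Continuous.rpow_const (by fun_prop) fun _ => Or.inr hp

theorem rootProdIntegral_nonneg (w : Fin n → ℂ) : 0 ≤ rootProdIntegral p ν w :=
  integral_nonneg fun _ => Real.rpow_nonneg (norm_nonneg _) _

theorem rootProdIntegral_eq_integral_eval (a : Fin n → ℂ) :
    rootProdIntegral p ν a = ∫ z, ‖(∏ i, (X - C (a i))).eval z‖ ^ p ∂ν := by
  simp only [rootProdIntegral, eval_prod, eval_sub, eval_X, eval_C]

theorem continuous_rootProdIntegral [IsFiniteMeasure ν] (hp : 0 ≤ p) (hD : IsCompact D)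
    (hν : ∀ᵐ z ∂ν, z ∈ D) : Continuous (rootProdIntegral (n := n) p ν) := by
  have := continuous_parametric_integral_of_continuous (μ := ν)
    (continuous_norm_prod_sub_rpow (n := n) hp) hD
  rwa [Measure.restrict_eq_self_of_ae_mem hν] at this

theorem rootProdIntegral_mono_of_dist_le [IsFiniteMeasure ν] (hp : 0 ≤ p)
    (hD : IsCompact D) (hν : ∀ᵐ z ∂ν, z ∈ D) {a w : Fin n → ℂ}
    (haw : ∀ i, ∀ z ∈ D, dist z (w i) ≤ dist z (a i)) :
    rootProdIntegral p ν w ≤ rootProdIntegral p ν a := by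
  refine integral_mono_ae
    ((continuous_norm_prod_sub_rpow hp).uncurry_left w |>.integrable_of_ae_mem_compact hD hν)
    ((continuous_norm_prod_sub_rpow hp).uncurry_left a |>.integrable_of_ae_mem_compact hD hν) ?_
  filter_upwards [hν] with z hz
  simp only [norm_prod]
  gcongr with i
  simpa only [dist_eq_norm] using haw i z hz

theorem tpn_eq_rpow_sInf_rootProdIntegral [IsFiniteMeasure ν] (hp : 0 < p) (hD : IsCompact D)
    (hDc : Convex ℝ D) (hne : D.Nonempty) (hν : ∀ᵐ z ∂ν, z ∈ D) :
    tpn p n ν = sInf (rootProdIntegral p ν '' univ.pi fun _ : Fin n => D) ^ (1 / p) := by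
  obtain ⟨w₀, hw₀, hmin⟩ := (isCompact_univ_pi fun _ => hD).exists_isMinOn
    (univ_pi_nonempty_iff.mpr fun _ => hne)
    (continuous_rootProdIntegral (n := n) hp.le hD hν).continuousOn
  have hinf : sInf (rootProdIntegral p ν '' univ.pi fun _ => D) = rootProdIntegral p ν w₀ :=
    (hmin.isGLB hw₀).csInf_eq ⟨_, mem_image_of_mem _ hw₀⟩
  rw [hinf]
  refine IsLeast.csInf_eq ⟨⟨∏ i, (X - C (w₀ i)), monic_prod_of_monic _ _ fun i _ => monic_X_sub_C _,
    ?_, by rw [rootProdIntegral_eq_integral_eval]⟩, ?_⟩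
  · rw [natDegree_prod_of_monic _ _ fun i _ => monic_X_sub_C _]
    simp
  rintro _ ⟨P, hm, hdeg, rfl⟩
  obtain ⟨a, rfl⟩ := hm.exists_eq_prod_X_sub_C hdeg
  choose proj hprojD hproj using hDc.exists_mem_forall_dist_le hne hD.isComplete
  rw [← rootProdIntegral_eq_integral_eval]
  gcongr
  · exact rootProdIntegral_nonneg w₀
  · exact (hmin (a := proj ∘ a) fun i _ => hprojD (a i)).trans
      (rootProdIntegral_mono_of_dist_le hp.le hD hν fun i z hz => hproj (a i) z hz)

end RootProdIntegral

theorem stmt_13_general (c : ℂ) (r : ℝ) (μ : Measure ℂ) (μs : ℕ → Measure ℂ)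
    [IsFiniteMeasure μ] [∀ j, IsFiniteMeasure (μs j)]
    (hsupp : μ (Metric.closedBall c r)ᶜ = 0)
    (hsupps : ∀ j, (μs j) (Metric.closedBall c r)ᶜ = 0)
    (hweak : ∀ f : ℂ → ℝ, Continuous f →
      Tendsto (fun j => ∫ z, f z ∂(μs j)) atTop (nhds (∫ z, f z ∂μ)))
    (p : ℝ) (hp : 0 < p) (n : ℕ) :
    Tendsto (fun j => tpn p n (μs j)) atTop (nhds (tpn p n μ)) := by
  -- radius `|r|` rather than `r`, so that `D` is nonempty even when `r < 0`
  set D := closedBall c |r|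
  have hD : IsCompact D := isCompact_closedBall c |r|
  have hDc : Convex ℝ D := convex_closedBall c |r|
  have hne : D.Nonempty := nonempty_closedBall.mpr (abs_nonneg r)
  have hae {ν : Measure ℂ} (hν : ν (closedBall c r)ᶜ = 0) : ∀ᵐ z ∂ν, z ∈ D :=
    measure_mono_null (compl_subset_compl.mpr (closedBall_subset_closedBall (le_abs_self r))) hν
  rw [tpn_eq_rpow_sInf_rootProdIntegral hp hD hDc hne (hae hsupp)]
  simp only [tpn_eq_rpow_sInf_rootProdIntegral hp hD hDc hne (hae (hsupps _))]
  refine Tendsto.rpow_const ?_ (Or.inr (by positivity))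
  refine TendstoUniformlyOn.tendsto_csInf_image ?_ (univ_pi_nonempty_iff.mpr fun _ => hne)
    ⟨0, by rintro _ ⟨w, -, rfl⟩; exact rootProdIntegral_nonneg w⟩
  exact tendstoUniformlyOn_integral_of_forall_tendsto (continuous_norm_prod_sub_rpow hp.le) hD
    (fun j => hae (hsupps j)) hweak (isCompact_univ_pi fun _ => hD)

/-- Continuity of the extremal numbers `t_{p,n}` under weak convergence of
finite measures supported in a common closed disc. -/
theorem stmt_13 (c : ℂ) (r : ℝ) (μ : Measure ℂ) (μs : ℕ → Measure ℂ)
    [IsFiniteMeasure μ] [∀ j, IsFiniteMeasure (μs j)]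
    (hsupp : μ (Metric.closedBall c r)ᶜ = 0)
    (hsupps : ∀ j, (μs j) (Metric.closedBall c r)ᶜ = 0)
    (hweak : ∀ f : ℂ → ℝ, Continuous f →
      Tendsto (fun j => ∫ z, f z ∂(μs j)) atTop (nhds (∫ z, f z ∂μ)))
    (p : ℝ) (hp : 0 < p) (n : ℕ) (hn : 1 ≤ n) :
    Tendsto (fun j => tpn p n (μs j)) atTop (nhds (tpn p n μ)) :=
  stmt_13_general c r μ μs hsupp hsupps hweak p hp n
end

section
/- Let N ≥ 2 be an integer, p ∈ [1, ∞), and let μ₀ be a finite Borel measure on the unit circle ∂𝔻 whose support is infinite. Let μ be the measure on ∂𝔻 defined by ∫ f dμ = ∫ (1/N) ∑_{j=1}^N f(ζ_j(z)) dμ₀(z), where ζ_1(z),…,ζ_N(z) are the N-th roots of z. If T_n is a monic polynomial of degree n satisfying ∫ z^k |T_n(z)|^{p−2} conj(T_n(z)) dμ₀(z) = 0 for k = 0,…,n−1, then for each ℓ ∈ {0,…,N−1} the monic polynomial S(z) = z^ℓ T_n(z^N) of degree ℓ + nN satisfies ∫ z^k |S(z)|^{p−2} conj(S(z)) dμ(z)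 = 0 for all k = 0,…,ℓ + nN − 1. -/
/-!
On the unit circle every `N`-th root `w` of `z` has `|w| = 1` and `S(w) = w^ℓ T(z)`, so
`w^k |S(w)|^(p-2) conj S(w) = w^(k-ℓ) |T(z)|^(p-2) conj T(z)`. Averaging over the roots kills
`w^(k-ℓ)` unless `N ∣ k - ℓ`, when it becomes `z^(k/N)` with `k/N < n`; the `μ`-integral is then
one of the integrals assumed to vanish.

The description of `μ` applies only to continuous functions, so it is used for the regularized
weight `max(|u|, e)^(p-2) conj u`, and `e → 0` by dominated convergence. This needs `μ` to live
on the circle as well, which follows by testing `μ` against a continuous function that vanishes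
exactly on the circle.
-/

open MeasureTheory Polynomial Filter Topology ComplexConjugate

/-- `dualWeight p 0 u = |u|^(p-2) conj u` is the weight in the `L^p` orthogonality conditions;
for `e > 0` it is regularized near `u = 0`, which makes it continuous. -/
noncomputable def dualWeight (p e : ℝ) (u : ℂ) : ℂ :=
  ((max ‖u‖ e ^ (p - 2) : ℝ) : ℂ) * conj u

section DualWeight

variable {p e : ℝ}

theorem dualWeight_zero (u : ℂ) :
    dualWeight p 0 u = ((‖u‖ ^ (p - 2) : ℝ) : ℂ) * conj u := by
  rw [dualWeight, max_eq_left (norm_nonneg u)]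

theorem continuous_dualWeight (he : 0 < e) : Continuous (dualWeight p e) := by
  have hmax : Continuous fun u : ℂ => max ‖u‖ e := continuous_norm.max continuous_const
  refine (Complex.continuous_ofReal.comp ?_).mul Complex.continuous_conj
  exact hmax.rpow_const fun u => Or.inl (he.trans_le (le_max_right _ _)).ne'

theorem dualWeight_mul_of_norm_eq_one {a : ℂ} (ha : ‖a‖ = 1) (u : ℂ) :
    dualWeight p e (a * u) = conj a * dualWeight p e u := by
  simp only [dualWeight, norm_mul, ha, one_mul, map_mul]
  ring

theorem norm_dualWeight_le (he : e ≤ 1) (hp : 1 ≤ p) (u : ℂ) :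
    ‖dualWeight p e u‖ ≤ max ‖u‖ 1 ^ (p - 1) := by
  rcases eq_or_ne u 0 with rfl | hu
  · simp [dualWeight]
  set M := max ‖u‖ e
  have hM : 0 < M := (norm_pos_iff.mpr hu).trans_le (le_max_left _ _)
  calc ‖dualWeight p e u‖ = M ^ (p - 2) * ‖u‖ := by
        rw [dualWeight, norm_mul, Complex.norm_conj, Complex.norm_real, Real.norm_of_nonneg
          (Real.rpow_nonneg hM.le _)]
    _ ≤ M ^ (p - 2) * M := by gcongr; exact le_max_left _ _
    _ = M ^ (p - 1) := by
        rw [← Real.rpow_add_one hM.ne']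
        ring_nf
    _ ≤ max ‖u‖ 1 ^ (p - 1) :=
        Real.rpow_le_rpow hM.le (max_le_max le_rfl he) (by linarith)

theorem tendsto_dualWeight (u : ℂ) :
    Tendsto (fun e => dualWeight p e u) (𝓝 0) (𝓝 (dualWeight p 0 u)) := by
  rcases eq_or_ne u 0 with rfl | hu
  · simp [dualWeight]
  refine tendsto_const_nhds.congr' ?_
  filter_upwards [Iio_mem_nhds (norm_pos_iff.mpr hu)] with e he
  rw [dualWeight, dualWeight, max_eq_left (norm_nonneg u), max_eq_left (Set.mem_Iio.mp he).le]

end DualWeight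

theorem tendsto_integral_mul_dualWeight {μ : Measure ℂ} [IsFiniteMeasure μ] {K : Set ℂ}
    (hK : IsCompact K) (hμK : μ Kᶜ = 0) {c Q : ℂ → ℂ} (hc : Continuous c) (hQ : Continuous Q)
    {p : ℝ} (hp : 1 ≤ p) :
    Tendsto (fun e => ∫ w, c w * dualWeight p e (Q w) ∂μ) (𝓝[>] 0)
      (𝓝 (∫ w, c w * dualWeight p 0 (Q w) ∂μ)) := by
  have hbound : Continuous fun w => ‖c w‖ * max ‖Q w‖ 1 ^ (p - 1) :=
    hc.norm.mul <| (hQ.norm.max continuous_const).rpow_const fun _ => Or.inr (by linarith)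
  obtain ⟨C, hC⟩ := hK.exists_bound_of_continuousOn hbound.continuousOn
  refine tendsto_integral_filter_of_dominated_convergence (fun _ => C) ?_ ?_
    (integrable_const C) ?_
  · filter_upwards [self_mem_nhdsWithin] with e he
    exact (hc.mul ((continuous_dualWeight he).comp hQ)).aestronglyMeasurable
  · filter_upwards [Ioc_mem_nhdsGT one_pos] with e he
    filter_upwards [ae_iff.mpr hμK] with w hw
    calc ‖c w * dualWeight p e (Q w)‖ ≤ ‖c w‖ * max ‖Q w‖ 1 ^ (p - 1) := by
          rw [norm_mul]; gcongr; exact norm_dualWeight_le he.2 hp _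
      _ ≤ C := (le_abs_self _).trans (hC w hw)
  · exact .of_forall fun w =>
      ((tendsto_dualWeight (Q w)).mono_left nhdsWithin_le_nhds).const_mul (c w)

theorem sum_nthRoots_zpow {K : Type*} [Field K] [DecidableEq K] {N : ℕ} {ω : K}
    (hω : IsPrimitiveRoot ω N) {α : K} (hα : α ≠ 0) (m : ℤ) :
    ∑ w ∈ (nthRoots N (α ^ N)).toFinset, w ^ m = if (N : ℤ) ∣ m then N * α ^ m else 0 := by
  rw [Finset.sum_eq_multiset_sum, Multiset.toFinset_val,
    (hω.nthRoots_nodup (pow_ne_zero N hα)).dedup, hω.nthRoots_eq rfl, Multiset.map_map,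
    ← Finset.range_val, ← Finset.sum_eq_multiset_sum]
  have hterm : ∀ j : ℕ, (ω ^ j * α) ^ m = α ^ m * (ω ^ m) ^ j := fun j => by
    rw [mul_zpow, ← zpow_natCast, ← zpow_mul, mul_comm (j : ℤ), zpow_mul, zpow_natCast, mul_comm]
  simp only [Function.comp_apply, hterm, ← Finset.mul_sum]
  split_ifs with hdvd
  · simp [(hω.zpow_eq_one_iff_dvd m).mpr hdvd, mul_comm]
  · have hN : (ω ^ m) ^ N = 1 := by
      rw [← zpow_natCast, ← zpow_mul, mul_comm, zpow_mul, zpow_natCast, hω.pow_eq_one, one_zpow]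
    rw [geom_sum_eq (mt (hω.zpow_eq_one_iff_dvd m).mp hdvd), hN, sub_self, zero_div, mul_zero]

/-- `nthRoots N z` unfolds to `(X ^ N - C z).roots`, the form used in the description of `μ`. -/
noncomputable def rootAverage (N : ℕ) (f : ℂ → ℂ) (z : ℂ) : ℂ :=
  (N : ℂ)⁻¹ * ∑ w ∈ (nthRoots N z).toFinset, f w

theorem norm_eq_one_of_pow_eq {N : ℕ} (hN : N ≠ 0) {w z : ℂ} (hw : w ^ N = z) (hz : ‖z‖ = 1) :
    ‖w‖ = 1 :=
  (pow_eq_one_iff_of_nonneg (norm_nonneg w) hN).mp (by rw [← norm_pow, hw, hz])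

theorem natCast_dvd_sub_iff_mod_eq {N ℓ : ℕ} (hℓ : ℓ < N) (k : ℕ) :
    (N : ℤ) ∣ (k : ℤ) - ℓ ↔ k % N = ℓ := by
  rw [← Nat.modEq_iff_dvd, Nat.ModEq, Nat.mod_eq_of_lt hℓ, eq_comm]

theorem rootAverage_pow_mul_eval_comp {N ℓ : ℕ} (hℓ : ℓ < N) {G : ℂ → ℂ}
    (hG : ∀ a, ‖a‖ = 1 → ∀ u, G (a * u) = conj a * G u) (T : ℂ[X]) (k : ℕ) {z : ℂ}
    (hz : ‖z‖ = 1) :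
    rootAverage N (fun w => w ^ k * G ((X ^ ℓ * T.comp (X ^ N)).eval w)) z =
      (if k % N = ℓ then z ^ (k / N) else 0) * G (T.eval z) := by
  have hN : 0 < N := by omega
  obtain ⟨α, rfl⟩ := IsAlgClosed.exists_pow_nat_eq z hN
  have hα : α ≠ 0 := by rintro rfl; simp [zero_pow hN.ne'] at hz
  have hterm : ∀ w ∈ (nthRoots N (α ^ N)).toFinset,
      w ^ k * G ((X ^ ℓ * T.comp (X ^ N)).eval w) = w ^ ((k : ℤ) - ℓ) * G (T.eval (α ^ N)) := by
    intro w hw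
    rw [Multiset.mem_toFinset, mem_nthRoots hN] at hw
    have hw₁ : ‖w‖ = 1 := norm_eq_one_of_pow_eq hN.ne' hw hz
    have hw₀ : w ≠ 0 := norm_ne_zero_iff.mp (by rw [hw₁]; exact one_ne_zero)
    have hwℓ : ‖w ^ ℓ‖ = 1 := by rw [norm_pow, hw₁, one_pow]
    rw [eval_mul, eval_pow, eval_X, eval_comp, eval_pow, eval_X, hw, hG _ hwℓ,
      ← Complex.inv_eq_conj hwℓ, zpow_sub₀ hw₀, zpow_natCast, zpow_natCast, div_eq_mul_inv,
      mul_assoc]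
  rw [rootAverage, Finset.sum_congr rfl hterm, ← Finset.sum_mul,
    sum_nthRoots_zpow (Complex.isPrimitiveRoot_exp N hN.ne') hα]
  simp only [natCast_dvd_sub_iff_mod_eq hℓ]
  split_ifs with hkℓ
  · have hdiv : ((N * (k / N) + ℓ : ℕ) : ℤ) = k := by rw [← hkℓ, Nat.div_add_mod]
    have hk : (k : ℤ) - ℓ = ((N * (k / N) : ℕ) : ℤ) := by
      push_cast at hdiv ⊢
      linear_combination -hdiv
    have hN₀ : (N : ℂ) ≠ 0 := by exact_mod_cast hN.ne'
    rw [hk, zpow_natCast, pow_mul]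
    field_simp
  · simp

theorem measure_compl_sphere_eq_zero {N : ℕ} (hN : N ≠ 0) {μ₀ μ : Measure ℂ} [IsFiniteMeasure μ]
    (hμ₀ : μ₀ (Metric.sphere 0 1)ᶜ = 0)
    (hμ : ∀ f : ℂ → ℂ, Continuous f → ∫ z, f z ∂μ = ∫ z, rootAverage N f z ∂μ₀) :
    μ (Metric.sphere 0 1)ᶜ = 0 := by
  set g : ℂ → ℝ := fun w => min |‖w‖ - 1| 1
  have hg : Continuous g := by fun_prop
  have hg₀ : ∀ w, 0 ≤ g w := fun w => le_min (abs_nonneg _) zero_le_one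
  have hg_int : Integrable g μ := .of_bound hg.aestronglyMeasurable 1 <|
    .of_forall fun w => by rw [Real.norm_of_nonneg (hg₀ w)]; exact min_le_right _ _
  have hint : ∫ w, (g w : ℂ) ∂μ = 0 := by
    rw [hμ _ (by fun_prop)]
    refine integral_eq_zero_of_ae ?_
    filter_upwards [ae_iff.mpr hμ₀] with z hz
    refine mul_eq_zero_of_right _ (Finset.sum_eq_zero fun w hw => ?_)
    rw [Multiset.mem_toFinset, mem_nthRoots (Nat.pos_of_ne_zero hN)] at hw
    simp [g, norm_eq_one_of_pow_eq hN hw (mem_sphere_zero_iff_norm.mp hz)]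
  rw [integral_complex_ofReal, Complex.ofReal_eq_zero,
    integral_eq_zero_iff_of_nonneg hg₀ hg_int] at hint
  refine ae_iff.mp ?_
  filter_upwards [hint] with w hw
  rcases min_choice |‖w‖ - 1| 1 with h | h <;> simp_all [g, sub_eq_zero]

theorem stmt_16_general (N : ℕ) (p : ℝ) (hp : 1 ≤ p)
    (μ₀ μ : Measure ℂ) [IsFiniteMeasure μ₀] [IsFiniteMeasure μ]
    (hsupp : μ₀ (Metric.sphere (0 : ℂ) 1)ᶜ = 0)
    (hμ : ∀ f : ℂ → ℂ, Continuous f →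
      ∫ z, f z ∂μ =
        ∫ z, (N : ℂ)⁻¹ * ∑ w ∈ ((X : Polynomial ℂ) ^ N - C z).roots.toFinset, f w ∂μ₀)
    (n : ℕ) (T : Polynomial ℂ)
    (hText : ∀ k : ℕ, k < n →
      ∫ z, z ^ k * ((‖T.eval z‖ ^ (p - 2) : ℝ) : ℂ) *
        (starRingEnd ℂ) (T.eval z) ∂μ₀ = 0)
    (ℓ : ℕ) (hℓ : ℓ < N)
    (S : Polynomial ℂ) (hS : S = X ^ ℓ * T.comp ((X : Polynomial ℂ) ^ N)) :
    ∀ k : ℕ, k < ℓ + n * N →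
      ∫ z, z ^ k * ((‖S.eval z‖ ^ (p - 2) : ℝ) : ℂ) *
        (starRingEnd ℂ) (S.eval z) ∂μ = 0 := by
  intro k hk
  subst hS
  set c : ℂ → ℂ := fun z => if k % N = ℓ then z ^ (k / N) else 0
  have hc : Continuous c := by
    by_cases h : k % N = ℓ <;> simp only [c, h, if_true, if_false] <;> fun_prop
  have hS_lim := tendsto_integral_mul_dualWeight (isCompact_sphere 0 1)
    (measure_compl_sphere_eq_zero (by omega) hsupp hμ) (continuous_pow k)
    (X ^ ℓ * T.comp (X ^ N)).continuous hp
  have hT_lim := tendsto_integral_mul_dualWeight (isCompact_sphere 0 1) hsupp hc T.continuous hp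
  have heq : ∀ᶠ e in 𝓝[>] 0, ∫ w, w ^ k * dualWeight p e ((X ^ ℓ * T.comp (X ^ N)).eval w) ∂μ =
      ∫ z, c z * dualWeight p e (T.eval z) ∂μ₀ := by
    filter_upwards [self_mem_nhdsWithin] with e he
    have hcont := continuous_dualWeight (p := p) he
    rw [hμ _ (by fun_prop)]
    refine integral_congr_ae ?_
    filter_upwards [ae_iff.mpr hsupp] with z hz
    exact rootAverage_pow_mul_eval_comp hℓ (fun _ => dualWeight_mul_of_norm_eq_one) T k
      (mem_sphere_zero_iff_norm.mp hz)
  have hlim := tendsto_nhds_unique (hS_lim.congr' heq) hT_lim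
  simp only [dualWeight_zero, ← mul_assoc] at hlim
  rw [hlim]
  by_cases hkℓ : k % N = ℓ
  · have hdiv := Nat.div_add_mod k N
    have hkN : k / N < n := Nat.lt_of_mul_lt_mul_left (a := N) (by rw [hkℓ] at hdiv; linarith)
    simpa [c, hkℓ] using hText (k / N) hkN
  · simp [c, hkℓ]

/-- Extremal polynomials on the pre-image of the unit circle under `z ↦ z^N`:
if `T_n` is a monic degree-`n` polynomial satisfying the `L^p(μ₀)` extremality
(orthogonality) conditions for a measure `μ₀` on the unit circle with infinite
support, and `μ` is the pull-back of `μ₀` under `z ↦ z^N` (averaging over the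
`N`-th roots), then for each `ℓ ∈ {0,…,N-1}` the monic polynomial
`S(z) = z^ℓ T_n(z^N)` satisfies the `L^p(μ)` extremality conditions in degree
`ℓ + nN`. -/
theorem stmt_16 (N : ℕ) (hN : 2 ≤ N) (p : ℝ) (hp : 1 ≤ p)
    (μ₀ μ : Measure ℂ) [IsFiniteMeasure μ₀] [IsFiniteMeasure μ]
    (hsupp : μ₀ (Metric.sphere (0 : ℂ) 1)ᶜ = 0)
    (hinf : {z : ℂ | ∀ r : ℝ, 0 < r → 0 < μ₀ (Metric.ball z r)}.Infinite)
    (hμ : ∀ f : ℂ → ℂ, Continuous f →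
      ∫ z, f z ∂μ =
        ∫ z, (N : ℂ)⁻¹ * ∑ w ∈ ((X : Polynomial ℂ) ^ N - C z).roots.toFinset, f w ∂μ₀)
    (n : ℕ) (T : Polynomial ℂ) (hT : T.Monic) (hTdeg : T.natDegree = n)
    (hText : ∀ k : ℕ, k < n →
      ∫ z, z ^ k * ((‖T.eval z‖ ^ (p - 2) : ℝ) : ℂ) *
        (starRingEnd ℂ) (T.eval z) ∂μ₀ = 0)
    (ℓ : ℕ) (hℓ : ℓ < N)
    (S : Polynomial ℂ) (hS : S = X ^ ℓ * T.comp ((X : Polynomial ℂ) ^ N)) :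
    ∀ k : ℕ, k < ℓ + n * N →
      ∫ z, z ^ k * ((‖S.eval z‖ ^ (p - 2) : ℝ) : ℂ) *
        (starRingEnd ℂ) (S.eval z) ∂μ = 0 :=
  stmt_16_general N p hp μ₀ μ hsupp hμ n T hText ℓ hℓ S hS
end
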